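/- The operation (Q, A) ⋉ (R, B) := (Q + A × R, A × B) on pairs of sets extends to a monoidal structure on Set × Set with unit (∅, {*}): there are natural associator and unitor isomorphisms satisfying the pentagon and triangle coherence conditions. -/

import Mathlib

/-!
A pair `(Q, A)` encodes the affine endofunctor `X ↦ Q ⊕ A × X` of `Type`, and `(Q, A) ⋉ (R, B)`
encodes the composite `X ↦ Q ⊕ A × (R ⊕ B × X) ≅ (Q ⊕ A × R) ⊕ (A × B) × X`. The associator and
unitors are therefore the canonical isomorphisms built from associativity of `⊕` and `×`,
distributivity of `×` over `⊕`, and the neutrality of `PEmpty` and `PUnit`; since all of these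
act on elements by rearranging tuples, every coherence law holds pointwise, case by case.
-/

open CategoryTheory

universe u

lemma types_prod_hom_ext {X Y : Type u × Type u} {f g : X ⟶ Y}
    (h₁ : ∀ x, f.1 x = g.1 x) (h₂ : ∀ x, f.2 x = g.2 x) : f = g :=
  Prod.hom_ext (ConcreteCategory.hom_ext _ _ h₁) (ConcreteCategory.hom_ext _ _ h₂)

namespace SemidirectTensor

abbrev tensorObj (X Y : Type u × Type u) : Type u × Type u :=
  (X.1 ⊕ X.2 × Y.1, X.2 × Y.2)

abbrev tensorUnit : Type u × Type u := (PEmpty, PUnit)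

def tensorHom {X₁ Y₁ X₂ Y₂ : Type u × Type u} (f : X₁ ⟶ Y₁) (g : X₂ ⟶ Y₂) :
    tensorObj X₁ X₂ ⟶ tensorObj Y₁ Y₂ :=
  (TypeCat.ofHom (Sum.map f.1 (Prod.map f.2 g.1)), TypeCat.ofHom (Prod.map f.2 g.2))

def associator (X Y Z : Type u × Type u) :
    tensorObj (tensorObj X Y) Z ≅ tensorObj X (tensorObj Y Z) :=
  Iso.prod
    ((Equiv.sumCongr (Equiv.refl _) (Equiv.prodAssoc _ _ _)).trans
      ((Equiv.sumAssoc _ _ _).trans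
        (Equiv.sumCongr (Equiv.refl _) (Equiv.prodSumDistrib _ _ _).symm))).toIso
    (Equiv.prodAssoc _ _ _).toIso

def leftUnitor (X : Type u × Type u) : tensorObj tensorUnit X ≅ X :=
  Iso.prod ((Equiv.emptySum _ _).trans (Equiv.punitProd _)).toIso (Equiv.punitProd _).toIso

def rightUnitor (X : Type u × Type u) : tensorObj X tensorUnit ≅ X :=
  Iso.prod
    ((Equiv.sumCongr (Equiv.refl _) (Equiv.prodPEmpty.{u, u + 1} _)).trans
      (Equiv.sumEmpty _ _)).toIso
    (Equiv.prodPUnit _).toIso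

instance : MonoidalCategoryStruct (Type u × Type u) where
  tensorObj := tensorObj
  tensorHom := tensorHom
  whiskerLeft X _ _ f := tensorHom (𝟙 X) f
  whiskerRight f Y := tensorHom f (𝟙 Y)
  tensorUnit := tensorUnit
  associator := associator
  leftUnitor := leftUnitor
  rightUnitor := rightUnitor

abbrev monoidalCategory : MonoidalCategory (Type u × Type u) :=
  .ofTensorHom
    (id_tensorHom_id := fun _ _ =>
      types_prod_hom_ext (by rintro (q | ⟨a, r⟩) <;> rfl) fun _ => rfl)
    (id_tensorHom := by intros; rfl)
    (tensorHom_id := by intros; rfl)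
    (tensorHom_comp_tensorHom := fun _ _ _ _ =>
      types_prod_hom_ext (by rintro (q | ⟨a, r⟩) <;> rfl) fun _ => rfl)
    (associator_naturality := fun _ _ _ =>
      types_prod_hom_ext (by rintro ((q | ⟨a, r⟩) | ⟨⟨a, b⟩, s⟩) <;> rfl) fun _ => rfl)
    (leftUnitor_naturality := fun _ =>
      types_prod_hom_ext (by rintro (e | ⟨a, r⟩); exacts [e.elim, rfl]) fun _ => rfl)
    (rightUnitor_naturality := fun _ =>
      types_prod_hom_ext (by rintro (q | ⟨a, e⟩); exacts [rfl, e.elim]) fun _ => rfl)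
    (pentagon := fun _ _ _ _ =>
      types_prod_hom_ext
        (by rintro (((q | ⟨a, r⟩) | ⟨⟨a, b⟩, s⟩) | ⟨⟨⟨a, b⟩, c⟩, t⟩) <;> rfl) fun _ => rfl)
    (triangle := fun _ _ =>
      types_prod_hom_ext (by rintro ((q | ⟨a, ⟨⟩⟩) | ⟨⟨a, b⟩, s⟩) <;> rfl) fun _ => rfl)

end SemidirectTensor

theorem semidirect_monoidal_structure :
    ∃ M : MonoidalCategory (Type u × Type u),
      (∀ X Y : Type u × Type u,
        M.tensorObj X Y = (X.1 ⊕ (X.2 × Y.1), X.2 × Y.2)) ∧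
      M.tensorUnit = (PEmpty, PUnit) :=
  ⟨SemidirectTensor.monoidalCategory, fun _ _ => rfl, rfl⟩
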